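/- For transmission T = 0.7, there exists α > 0 such that c₁(α,T)² + erf(√(T/2)·α)² > 1; that is, with two homodyne measurements a CHSH violation S = 2√(c₁² + c₂²) > 2 is still possible at 70% line transmission. -/

import Mathlib

open Real

/-- Error function `erf x = (2/√π)·∫₀ˣ e^{−t²} dt`. -/
noncomputable def erf (x : ℝ) : ℝ :=
  (2 / Real.sqrt π) * ∫ t in (0 : ℝ)..x, Real.exp (-t ^ 2)

/-- Homodyne binning parameter at transmission `T`: `b = π/(2√2·√T·α)`. -/
noncomputable def bT (α T : ℝ) : ℝ := π / (2 * Real.sqrt 2 * (Real.sqrt T * α))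

/-- Homodyne interference coefficient at transmission `T`:
`c₁(α,T) = e^{−(1−T)α²/2}·[(2/√π)·∫_{−b}^{b} e^{−x²} cos(√2 x √T α) dx − e^{−Tα²/2}]`. -/
noncomputable def c1T (α T : ℝ) : ℝ :=
  Real.exp (-(1 - T) * α ^ 2 / 2) *
    ((2 / Real.sqrt π) *
        (∫ x in (-bT α T)..(bT α T),
          Real.exp (-x ^ 2) * Real.cos (Real.sqrt 2 * x * (Real.sqrt T * α)))
      - Real.exp (-T * α ^ 2 / 2))

/-!
Take `α = 10`. The binning window `[-b, b]` is exactly the central lobe of `cos (k x)`, `k = √2 √T α`,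
so `c₁ ≥ e^{-15} ((2/√π) (2/k) e^{-b²} - e^{-35})`, which is of order `e^{-15}`. On the other hand
`1 - c₂² ≤ 2 (1 - erf x)` with `x² = Tα²/2 = 35`, and the Gaussian tail bound
`1 - erf x ≤ e^{-x²} / (√π x)` makes this of order `e^{-35}`, far below `c₁² ≈ e^{-30}`.
-/

open MeasureTheory Set Filter Topology

lemma integrable_exp_neg_sq : Integrable fun t : ℝ => exp (-t ^ 2) := by
  simpa using integrable_exp_neg_mul_sq one_pos

lemma hasDerivAt_neg_exp_neg_sq_div_two (t : ℝ) :
    HasDerivAt (fun t : ℝ => -exp (-t ^ 2) / 2) (t * exp (-t ^ 2)) t := by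
  have h := (((hasDerivAt_pow 2 t).fun_neg).exp.fun_neg).div_const 2
  exact h.congr_deriv (by norm_num; ring)

lemma tendsto_neg_exp_neg_sq_div_two_atTop :
    Tendsto (fun t : ℝ => -exp (-t ^ 2) / 2) atTop (𝓝 0) := by
  have h := (tendsto_exp_atBot.comp
    (tendsto_neg_atTop_atBot.comp (tendsto_pow_atTop two_ne_zero))).neg.div_const 2
  simpa using h

lemma integrableOn_Ioi_mul_exp_neg_sq {x : ℝ} (hx : 0 ≤ x) :
    IntegrableOn (fun t : ℝ => t * exp (-t ^ 2)) (Ioi x) :=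
  integrableOn_Ioi_deriv_of_nonneg' (fun t _ => hasDerivAt_neg_exp_neg_sq_div_two t)
    (fun _ ht => mul_nonneg (hx.trans ht.out.le) (exp_pos _).le)
    tendsto_neg_exp_neg_sq_div_two_atTop

lemma integral_Ioi_mul_exp_neg_sq {x : ℝ} (hx : 0 ≤ x) :
    ∫ t in Ioi x, t * exp (-t ^ 2) = exp (-x ^ 2) / 2 := by
  rw [integral_Ioi_of_hasDerivAt_of_nonneg' (fun t _ => hasDerivAt_neg_exp_neg_sq_div_two t)
    (fun _ ht => mul_nonneg (hx.trans ht.out.le) (exp_pos _).le)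
    tendsto_neg_exp_neg_sq_div_two_atTop]
  ring

-- On `(x, ∞)` we have `e^{-t²} ≤ (t / x) e^{-t²}`, and the right side has an explicit primitive.
lemma integral_Ioi_exp_neg_sq_le {x : ℝ} (hx : 0 < x) :
    ∫ t in Ioi x, exp (-t ^ 2) ≤ exp (-x ^ 2) / (2 * x) :=
  calc ∫ t in Ioi x, exp (-t ^ 2)
      ≤ ∫ t in Ioi x, x⁻¹ * (t * exp (-t ^ 2)) := by
        refine setIntegral_mono_on integrable_exp_neg_sq.integrableOn
          ((integrableOn_Ioi_mul_exp_neg_sq hx.le).const_mul _) measurableSet_Ioi fun t ht => ?_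
        rw [← mul_assoc, ← div_eq_inv_mul]
        exact le_mul_of_one_le_left (exp_pos _).le ((one_le_div hx).2 ht.out.le)
    _ = exp (-x ^ 2) / (2 * x) := by
        rw [integral_const_mul, integral_Ioi_mul_exp_neg_sq hx.le]
        field_simp

lemma erf_eq_one_sub_integral_Ioi (x : ℝ) :
    erf x = 1 - 2 / √π * ∫ t in Ioi x, exp (-t ^ 2) := by
  have hhalf : ∫ t in Ioi (0 : ℝ), exp (-t ^ 2) = √π / 2 := by
    simpa using integral_gaussian_Ioi 1
  rw [erf, ← intervalIntegral.integral_Ioi_sub_Ioi' integrable_exp_neg_sq.integrableOn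
    integrable_exp_neg_sq.integrableOn, hhalf]
  have : √π ≠ 0 := by positivity
  field_simp

lemma one_sub_erf_le {x : ℝ} (hx : 0 < x) : 1 - erf x ≤ exp (-x ^ 2) / (√π * x) := by
  rw [erf_eq_one_sub_integral_Ioi, sub_sub_cancel]
  calc 2 / √π * ∫ t in Ioi x, exp (-t ^ 2)
      ≤ 2 / √π * (exp (-x ^ 2) / (2 * x)) := by gcongr; exact integral_Ioi_exp_neg_sq_le hx
    _ = exp (-x ^ 2) / (√π * x) := by field_simp

-- On the central lobe `|k x| ≤ π/2` the cosine is nonnegative and the Gaussian is at least `e^{-b²}`.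
lemma two_mul_exp_neg_sq_div_le_integral_exp_neg_sq_mul_cos {k b : ℝ} (hk : 0 < k)
    (hkb : k * b = π / 2) :
    2 * exp (-b ^ 2) / k ≤ ∫ x in -b..b, exp (-x ^ 2) * cos (k * x) := by
  have hb : 0 ≤ b := by nlinarith [pi_pos]
  have hcos : ∫ x in -b..b, cos (k * x) = 2 / k := by
    rw [intervalIntegral.integral_comp_mul_left (fun x => cos x) hk.ne', integral_cos, mul_neg,
      hkb, sin_neg, sin_pi_div_two, smul_eq_mul]
    field_simp
    ring
  calc 2 * exp (-b ^ 2) / k = ∫ x in -b..b, exp (-b ^ 2) * cos (k * x) := by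
        rw [intervalIntegral.integral_const_mul, hcos]
        ring
    _ ≤ ∫ x in -b..b, exp (-x ^ 2) * cos (k * x) := by
        refine intervalIntegral.integral_mono_on (by linarith)
          (Continuous.intervalIntegrable (by fun_prop) _ _)
          (Continuous.intervalIntegrable (by fun_prop) _ _)
          fun x hx => ?_
        have hkx : |k * x| ≤ π / 2 := by
          rw [abs_mul, abs_of_pos hk, ← hkb]
          exact mul_le_mul_of_nonneg_left (abs_le.2 hx) hk.le
        gcongr ?_ * _
        · exact cos_nonneg_of_mem_Icc (abs_le.1 hkx)
        · exact exp_le_exp.2 (neg_le_neg (sq_le_sq' hx.1 hx.2))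

lemma mul_bT {α T : ℝ} (hT : 0 < T) (hα : 0 < α) : √2 * (√T * α) * bT α T = π / 2 := by
  unfold bT
  field_simp

lemma le_c1T {α T : ℝ} (hT : 0 < T) (hα : 0 < α) :
    exp (-(1 - T) * α ^ 2 / 2) *
        (2 / √π * (2 * exp (-bT α T ^ 2) / (√2 * (√T * α))) - exp (-T * α ^ 2 / 2)) ≤
      c1T α T := by
  have hint : ∫ x in -bT α T..bT α T, exp (-x ^ 2) * cos (√2 * x * (√T * α)) =
      ∫ x in -bT α T..bT α T, exp (-x ^ 2) * cos (√2 * (√T * α) * x) := by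
    simp only [mul_right_comm (√2)]
  unfold c1T
  rw [hint]
  gcongr
  exact two_mul_exp_neg_sq_div_le_integral_exp_neg_sq_mul_cos (by positivity) (mul_bT hT hα)

lemma exp_neg_five_le : exp (-5) ≤ 1 / 18 := by
  rw [exp_neg, inv_eq_one_div]
  gcongr
  linarith [quadratic_le_exp_of_nonneg (x := 5) (by norm_num)]

lemma sqrt_pi_mem_Icc : √π ∈ Icc 1.77 1.78 :=
  ⟨(le_sqrt' (by norm_num)).2 (by linarith [pi_gt_d2]),
    (sqrt_le_left (by norm_num)).2 (by linarith [pi_lt_d2])⟩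

lemma le_c1T_at_10_0_7 : exp (-15) * 0.12 ≤ c1T 10 0.7 := by
  have hc1 := le_c1T (α := 10) (T := 0.7) (by norm_num) (by norm_num)
  rw [show -(1 - 0.7 : ℝ) * 10 ^ 2 / 2 = -15 by norm_num,
    show -(0.7 : ℝ) * 10 ^ 2 / 2 = -35 by norm_num] at hc1
  set k := √2 * (√0.7 * 10) with hk
  set b := bT 10 0.7
  have hk2 : k ^ 2 = 140 := by rw [hk, mul_pow, mul_pow, sq_sqrt, sq_sqrt] <;> norm_num
  have hk_le : k ≤ 11.84 := by nlinarith [show 0 < k by positivity]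
  have hb2 : b ^ 2 ≤ 0.018 := by
    have hkb : (k * b) ^ 2 = (π / 2) ^ 2 := by rw [mul_bT (by norm_num) (by norm_num)]
    nlinarith [pi_lt_d2, pi_pos]
  have hA : 0.18 ≤ 2 / √π * (2 * exp (-b ^ 2) / k) :=
    calc (0.18 : ℝ) ≤ 2 / 1.78 * (2 * (1 - 0.018) / 11.84) := by norm_num
      _ ≤ 2 / √π * (2 * exp (-b ^ 2) / k) := by
        gcongr
        · exact sqrt_pi_mem_Icc.2
        · linarith [add_one_le_exp (-b ^ 2)]
  have h35 : exp (-35) ≤ 1 / 18 :=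
    (exp_le_exp.2 (by norm_num)).trans exp_neg_five_le
  refine le_trans ?_ hc1
  gcongr
  linarith

lemma one_sub_erf_le_at_10_0_7 : 1 - erf (√(0.7 / 2) * 10) ≤ exp (-30) / 180 := by
  set x := √(0.7 / 2) * 10 with hx
  have hx2 : x ^ 2 = 35 := by rw [hx, mul_pow, sq_sqrt] <;> norm_num
  have hx_ge : 5.9 ≤ x := by nlinarith [show 0 < x by positivity]
  have hsx : 10 ≤ √π * x := by nlinarith [sqrt_pi_mem_Icc.1]
  have h35 : exp (-35) = exp (-30) * exp (-5) := by rw [← exp_add]; norm_num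
  calc 1 - erf x ≤ exp (-x ^ 2) / (√π * x) := one_sub_erf_le (by positivity)
    _ ≤ exp (-30) * (1 / 18) / 10 := by
        rw [hx2, h35]
        gcongr
        exact exp_neg_five_le
    _ = exp (-30) / 180 := by ring

/-- At transmission `T = 0.7`, the two-homodyne Bell test still shows a CHSH violation:
there exists `α > 0` with `c₁(α,T)² + erf(√(T/2)·α)² > 1`, i.e. `S = 2√(c₁² + c₂²) > 2`. -/
theorem two_homodyne_violation_at_T_0_7 :
    ∃ α > (0 : ℝ),
      (c1T α 0.7) ^ 2 + (erf (Real.sqrt (0.7 / 2) * α)) ^ 2 > 1 := by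
  refine ⟨10, by norm_num, ?_⟩
  have hc1 := le_c1T_at_10_0_7
  have herf := one_sub_erf_le_at_10_0_7
  have h30 : exp (-15) ^ 2 = exp (-30) := by rw [← exp_nat_mul]; norm_num
  have hc1_sq : exp (-30) * 0.0144 ≤ c1T 10 0.7 ^ 2 := by
    rw [← h30]
    nlinarith [exp_pos (-15)]
  nlinarith [exp_pos (-30), sq_nonneg (1 - erf (√(0.7 / 2) * 10))]
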